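/- Let v and c be real parameters with 0 < v < c, and let f(z) = (1/2)·z·(1−z)·(v − c·z). If γ : ℝ → ℝ is differentiable and satisfies γ'(t) = f(γ(t)) for all t ≥ 0, with initial condition 0 < γ(0) < 1, then γ(t) converges to v/c as t → ∞. -/

import Mathlib

noncomputable section

/-- The right-hand side of the reduced replicator ODE of the
two-strategy Hawk-Dove game. -/
def f (v c : ℝ) (z : ℝ) : ℝ := (1/2) * z * (1 - z) * (v - c * z)

/-!
A solution of `ż = g(z)` cannot cross a level at which the field points back
towards the side it came from, so a solution starting in `(a', p]` stays in `[z(0), p]` when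
`g > 0` on `(a', p)` and `g < 0` on `(p, b')`. If it stayed below some `a < p` forever, then on
the compact interval `[z(0), a]` the field would be bounded below by some `δ > 0`, and the
solution would grow at least like `δ t`, which is absurd. Starting in `[p, b')` is the mirror
image under `z ↦ -z`. The Hawk-Dove field has exactly this sign pattern around `v / c` on `(0, 1)`.
-/

open Set Filter Topology

section ScalarODE

variable {g γ : ℝ → ℝ} {t₀ : ℝ}

lemma continuousOn_Icc_of_hasDerivAt (hγ : ∀ t ≥ t₀, HasDerivAt γ (g (γ t)) t) (t : ℝ) :
    ContinuousOn γ (Icc t₀ t) :=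
  fun s hs => (hγ s hs.1).continuousAt.continuousWithinAt

/-- Each level `y ∈ (b, b')` is a fence the solution meets only while moving down. -/
lemma ode_le_of_field_neg_above {b b' : ℝ} (hγ : ∀ t ≥ t₀, HasDerivAt γ (g (γ t)) t)
    (hbb' : b < b') (hneg : ∀ z ∈ Ioo b b', g z < 0) (h₀ : γ t₀ ≤ b) :
    ∀ t ≥ t₀, γ t ≤ b := by
  intro t ht
  by_contra! hbt
  obtain ⟨y, hby, hyt⟩ := exists_between (lt_min hbt hbb')
  have hty : γ t ≤ y :=
    image_le_of_deriv_right_lt_deriv_boundary (continuousOn_Icc_of_hasDerivAt hγ t)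
      (fun s hs => (hγ s hs.1).hasDerivWithinAt) (B := fun _ => y) (h₀.trans hby.le)
      (fun _ => hasDerivAt_const _ _)
      (fun s _ hs => hs ▸ hneg y ⟨hby, hyt.trans_le (min_le_right _ _)⟩) ⟨ht, le_rfl⟩
  exact (hty.trans_lt (hyt.trans_le (min_le_left _ _))).false

lemma ode_ge_of_field_pos_below {a' a : ℝ} (hγ : ∀ t ≥ t₀, HasDerivAt γ (g (γ t)) t)
    (ha'a : a' < a) (hpos : ∀ z ∈ Ioo a' a, 0 < g z) (h₀ : a ≤ γ t₀) :
    ∀ t ≥ t₀, a ≤ γ t := by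
  intro t ht
  by_contra! hta
  obtain ⟨y, hty, hya⟩ := exists_between (max_lt hta ha'a)
  have hyt : y ≤ γ t :=
    image_le_of_deriv_right_lt_deriv_boundary' (continuousOn_const (c := y))
      (fun _ _ => hasDerivWithinAt_const _ _ y) (hya.le.trans h₀)
      (continuousOn_Icc_of_hasDerivAt hγ t) (fun s hs => (hγ s hs.1).hasDerivWithinAt)
      (fun s _ hs => hs ▸ hpos y ⟨(le_max_right _ _).trans_lt hty, hya⟩) ⟨ht, le_rfl⟩
  exact (hyt.trans_lt ((le_max_left _ _).trans_lt hty)).false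

lemma ode_exists_gt_of_field_pos {lo a : ℝ} (hγ : ∀ t ≥ t₀, HasDerivAt γ (g (γ t)) t)
    (hg : ContinuousOn g (Icc lo a)) (hpos : ∀ z ∈ Icc lo a, 0 < g z)
    (hlo : ∀ t ≥ t₀, lo ≤ γ t) : ∃ t ≥ t₀, a < γ t := by
  by_contra! hle
  have hloa : lo ≤ a := (hlo t₀ le_rfl).trans (hle t₀ le_rfl)
  obtain ⟨z₀, hz₀, hmin⟩ := isCompact_Icc.exists_isMinOn (nonempty_Icc.2 hloa) hg
  have hδ : 0 < g z₀ := hpos z₀ hz₀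
  have hgrowth : ∀ t ≥ t₀, g z₀ * (t - t₀) ≤ γ t - γ t₀ := fun t ht =>
    (convex_Ici t₀).mul_sub_le_image_sub_of_le_deriv
      (fun s hs => (hγ s hs).continuousAt.continuousWithinAt)
      (fun s hs => (hγ s (interior_subset hs)).differentiableAt.differentiableWithinAt)
      (fun s hs => by
        rw [interior_Ici] at hs
        rw [(hγ s hs.le).deriv]
        exact hmin ⟨hlo s hs.le, hle s hs.le⟩)
      t₀ self_mem_Ici t ht ht
  set T := t₀ + (a - lo + 1) / g z₀
  have hT : t₀ ≤ T := le_add_of_nonneg_right (div_nonneg (by linarith) hδ.le)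
  have hgT : g z₀ * (T - t₀) = a - lo + 1 := by
    rw [add_sub_cancel_left, mul_div_cancel₀ _ hδ.ne']
  linarith [hgrowth T hT, hle T hT, hlo t₀ le_rfl]

lemma tendsto_of_field_pos_neg_of_le {a' p b' : ℝ} (hg : Continuous g)
    (hγ : ∀ t ≥ t₀, HasDerivAt γ (g (γ t)) t) (hpb' : p < b')
    (hpos : ∀ z ∈ Ioo a' p, 0 < g z) (hneg : ∀ z ∈ Ioo p b', g z < 0)
    (ha'γ : a' < γ t₀) (hγp : γ t₀ ≤ p) : Tendsto γ atTop (𝓝 p) := by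
  have hup : ∀ t ≥ t₀, γ t ≤ p := ode_le_of_field_neg_above hγ hpb' hneg hγp
  have hlow : ∀ t ≥ t₀, γ t₀ ≤ γ t := ode_ge_of_field_pos_below hγ ha'γ
    (fun z hz => hpos z ⟨hz.1, hz.2.trans_le hγp⟩) le_rfl
  have hmono : ∀ T ≥ t₀, ∀ t ≥ T, γ T ≤ γ t := fun T hT =>
    ode_ge_of_field_pos_below (fun t ht => hγ t (hT.trans ht)) (ha'γ.trans_le (hlow T hT))
      (fun z hz => hpos z ⟨hz.1, hz.2.trans_le (hup T hT)⟩) le_rfl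
  refine tendsto_order.2 ⟨fun a hap => ?_, fun a hpa => ?_⟩
  · obtain ⟨T, hT, haT⟩ := ode_exists_gt_of_field_pos hγ hg.continuousOn
      (fun z hz => hpos z ⟨ha'γ.trans_le hz.1, hz.2.trans_lt hap⟩) hlow
    filter_upwards [eventually_ge_atTop T] with t ht using haT.trans_le (hmono T hT t ht)
  · filter_upwards [eventually_ge_atTop t₀] with t ht using (hup t ht).trans_lt hpa

lemma tendsto_of_field_pos_neg {a' p b' : ℝ} (hg : Continuous g)
    (hγ : ∀ t ≥ t₀, HasDerivAt γ (g (γ t)) t) (hp : p ∈ Ioo a' b')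
    (hpos : ∀ z ∈ Ioo a' p, 0 < g z) (hneg : ∀ z ∈ Ioo p b', g z < 0)
    (h₀ : γ t₀ ∈ Ioo a' b') : Tendsto γ atTop (𝓝 p) := by
  rcases le_or_gt (γ t₀) p with hle | hlt
  · exact tendsto_of_field_pos_neg_of_le hg hγ hp.2 hpos hneg h₀.1 hle
  · -- `-γ` solves the ODE of the mirrored field `z ↦ -g (-z)`.
    have hmirror := tendsto_of_field_pos_neg_of_le (g := fun z => -g (-z)) (γ := fun t => -γ t)
      (a' := -b') (p := -p) (b' := -a') (by fun_prop)
      (fun t ht => by simpa using (hγ t ht).fun_neg) (neg_lt_neg hp.1)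
      (fun z hz => neg_pos.2 (hneg (-z) ⟨lt_neg.2 hz.2, neg_lt.2 hz.1⟩))
      (fun z hz => neg_neg_iff_pos.2 (hpos (-z) ⟨lt_neg.2 hz.2, neg_lt.2 hz.1⟩))
      (neg_lt_neg h₀.2) (neg_le_neg hlt.le)
    simpa using hmirror.neg

end ScalarODE

lemma f_pos_of_mem_Ioo {v c z : ℝ} (hc : 0 < c) (hvc : v ≤ c) (hz : z ∈ Ioo 0 (v / c)) :
    0 < f v c z := by
  have hcz : c * z < v := (lt_div_iff₀' hc).1 hz.2
  have hz₁ : z < 1 := hz.2.trans_le ((div_le_one hc).2 hvc)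
  exact mul_pos (mul_pos (mul_pos one_half_pos hz.1) (sub_pos.2 hz₁)) (sub_pos.2 hcz)

lemma f_neg_of_mem_Ioo {v c z : ℝ} (hv : 0 ≤ v) (hc : 0 < c) (hz : z ∈ Ioo (v / c) 1) :
    f v c z < 0 := by
  have hcz : v < c * z := (div_lt_iff₀' hc).1 hz.1
  have hz₀ : 0 < z := (div_nonneg hv hc.le).trans_lt hz.1
  exact mul_neg_of_pos_of_neg (mul_pos (mul_pos one_half_pos hz₀) (sub_pos.2 hz.2))
    (sub_neg.2 hcz)

theorem two_strategy_convergence (v c : ℝ) (hv : 0 < v) (hc : v < c)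
    (γ : ℝ → ℝ) (hγ : Differentiable ℝ γ)
    (hode : ∀ t : ℝ, 0 ≤ t → deriv γ t = f v c (γ t))
    (h0 : 0 < γ 0) (h1 : γ 0 < 1) :
    Filter.Tendsto γ Filter.atTop (nhds (v/c)) := by
  have hc₀ : 0 < c := hv.trans hc
  exact tendsto_of_field_pos_neg (by unfold f; fun_prop)
    (fun t ht => hode t ht ▸ (hγ t).hasDerivAt) ⟨div_pos hv hc₀, (div_lt_one hc₀).2 hc⟩
    (fun z hz => f_pos_of_mem_Ioo hc₀ hc.le hz) (fun z hz => f_neg_of_mem_Ioo hv.le hc₀ hz)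
    ⟨h0, h1⟩
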